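/- arXiv:2505.11304 — 3 statements merged into one kernel-verified Lean document; each statement's English description precedes it below -/
import Mathlib

section
/- Let ω_m, Ω_m > 0 with ∑_m ω_m = ∑_m Ω_m = 1, and let g_1,…,g_M ∈ ℝ^d. If ∑_m Ω_m ‖g_m‖² ≤ β²‖∑_m Ω_m g_m‖² + κ², then ‖∑_m ω_m g_m − ∑_m Ω_m g_m‖² ≤ χ² · (β²‖∑_m Ω_m g_m‖² + κ²), where χ² = ∑_m (ω_m − Ω_m)²/Ω_m. -/
open Finset

theorem gradient_mismatch_bound (M d : ℕ)
    (ω Ω : Fin M → ℝ) (hω : ∀ m, 0 < ω m) (hΩ : ∀ m, 0 < Ω m)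
    (hωsum : ∑ m, ω m = 1) (hΩsum : ∑ m, Ω m = 1)
    (g : Fin M → EuclideanSpace ℝ (Fin d))
    (β κ : ℝ) (hβ : 1 ≤ β ^ 2) (hκ : 0 ≤ κ)
    (hdis : ∑ m, Ω m * ‖g m‖ ^ 2 ≤ β ^ 2 * ‖∑ m, Ω m • g m‖ ^ 2 + κ ^ 2) :
    ‖(∑ m, ω m • g m) - ∑ m, Ω m • g m‖ ^ 2 ≤
      (∑ m, (ω m - Ω m) ^ 2 / Ω m) *
        (β ^ 2 * ‖∑ m, Ω m • g m‖ ^ 2 + κ ^ 2) := by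
  have hdiff : (∑ m, ω m • g m) - ∑ m, Ω m • g m = ∑ m, (ω m - Ω m) • g m := by
    rw [← Finset.sum_sub_distrib]
    congr 1; ext m; rw [sub_smul]
  have hchi : 0 ≤ ∑ m, (ω m - Ω m) ^ 2 / Ω m :=
    Finset.sum_nonneg fun m _ => div_nonneg (sq_nonneg _) (hΩ m).le
  have hkey : ‖∑ m, (ω m - Ω m) • g m‖ ^ 2 ≤
      (∑ m, (ω m - Ω m) ^ 2 / Ω m) * (∑ m, Ω m * ‖g m‖ ^ 2) := by
    have h1 : ‖∑ m, (ω m - Ω m) • g m‖ ≤ ∑ m, |ω m - Ω m| * ‖g m‖ := by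
      refine (norm_sum_le _ _).trans_eq ?_
      congr 1; ext m; rw [norm_smul, Real.norm_eq_abs]
    have h2 : (∑ m, |ω m - Ω m| * ‖g m‖) ^ 2 ≤
        (∑ m, (ω m - Ω m) ^ 2 / Ω m) * (∑ m, Ω m * ‖g m‖ ^ 2) := by
      have := Finset.sum_mul_sq_le_sq_mul_sq Finset.univ
        (fun m => |ω m - Ω m| / Real.sqrt (Ω m))
        (fun m => Real.sqrt (Ω m) * ‖g m‖)
      calc (∑ m, |ω m - Ω m| * ‖g m‖) ^ 2
          = (∑ m, (|ω m - Ω m| / Real.sqrt (Ω m)) * (Real.sqrt (Ω m) * ‖g m‖)) ^ 2 := by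
            congr 1; apply Finset.sum_congr rfl; intro m _
            have hs : Real.sqrt (Ω m) ≠ 0 := (Real.sqrt_pos.mpr (hΩ m)).ne'
            field_simp
        _ ≤ (∑ m, (|ω m - Ω m| / Real.sqrt (Ω m)) ^ 2) *
              (∑ m, (Real.sqrt (Ω m) * ‖g m‖) ^ 2) :=
            Finset.sum_mul_sq_le_sq_mul_sq Finset.univ _ _
        _ = (∑ m, (ω m - Ω m) ^ 2 / Ω m) * (∑ m, Ω m * ‖g m‖ ^ 2) := by
            congr 1 <;> apply Finset.sum_congr rfl <;> intro m _
            · rw [div_pow, sq_abs, Real.sq_sqrt (hΩ m).le]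
            · rw [mul_pow, Real.sq_sqrt (hΩ m).le]
    calc ‖∑ m, (ω m - Ω m) • g m‖ ^ 2
        ≤ (∑ m, |ω m - Ω m| * ‖g m‖) ^ 2 := by
          apply pow_le_pow_left₀ (norm_nonneg _) h1 2
      _ ≤ _ := h2
  rw [hdiff]
  exact hkey.trans (mul_le_mul_of_nonneg_left hdis hchi)
end

section
/- Under the hypotheses of the previous statement, the norm of the true gradient satisfies ‖∑_m ω_m g_m‖ ≤ (β√χ² + 1)·‖∑_m Ω_m g_m‖ + κ√χ², where χ² = ∑_m (ω_m − Ω_m)²/Ω_m. -/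
open Finset

theorem true_gradient_norm_bound (M d : ℕ)
    (ω Ω : Fin M → ℝ) (hω : ∀ m, 0 < ω m) (hΩ : ∀ m, 0 < Ω m)
    (hωsum : ∑ m, ω m = 1) (hΩsum : ∑ m, Ω m = 1)
    (g : Fin M → EuclideanSpace ℝ (Fin d))
    (β κ : ℝ) (hβ : 1 ≤ β) (hκ : 0 ≤ κ)
    (hdis : ∑ m, Ω m * ‖g m‖ ^ 2 ≤ β ^ 2 * ‖∑ m, Ω m • g m‖ ^ 2 + κ ^ 2) :
    ‖∑ m, ω m • g m‖ ≤
      (β * Real.sqrt (∑ m, (ω m - Ω m) ^ 2 / Ω m) + 1) * ‖∑ m, Ω m • g m‖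
        + κ * Real.sqrt (∑ m, (ω m - Ω m) ^ 2 / Ω m) := by
  set S : EuclideanSpace ℝ (Fin d) := ∑ m, Ω m • g m with hS
  set χ2 : ℝ := ∑ m, (ω m - Ω m) ^ 2 / Ω m with hχ2
  set Q : ℝ := ∑ m, Ω m * ‖g m‖ ^ 2 with hQ
  have hχ2nn : 0 ≤ χ2 := Finset.sum_nonneg fun m _ =>
    div_nonneg (sq_nonneg _) (hΩ m).le
  have hQnn : 0 ≤ Q := Finset.sum_nonneg fun m _ =>
    mul_nonneg (hΩ m).le (sq_nonneg _)
  -- Step 1: triangle inequality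
  have hsplit : ‖∑ m, ω m • g m‖ ≤ ‖∑ m, (ω m - Ω m) • g m‖ + ‖S‖ := by
    have : ∑ m, ω m • g m = (∑ m, (ω m - Ω m) • g m) + S := by
      rw [hS, ← Finset.sum_add_distrib]
      congr 1; ext m; rw [← add_smul]; ring_nf
    rw [this]; exact norm_add_le _ _
  -- Step 2: Cauchy-Schwarz
  have hcs : ‖∑ m, (ω m - Ω m) • g m‖ ≤ Real.sqrt χ2 * Real.sqrt Q := by
    have h1 : ‖∑ m, (ω m - Ω m) • g m‖ ≤ ∑ m, |ω m - Ω m| * ‖g m‖ := by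
      refine (norm_sum_le _ _).trans (le_of_eq ?_)
      refine Finset.sum_congr rfl fun m _ => ?_
      rw [norm_smul, Real.norm_eq_abs]
    have h2 : (∑ m, |ω m - Ω m| * ‖g m‖) ^ 2 ≤ χ2 * Q := by
      have hcs0 := Finset.sum_mul_sq_le_sq_mul_sq Finset.univ
        (fun m => |ω m - Ω m| / Real.sqrt (Ω m))
        (fun m => Real.sqrt (Ω m) * ‖g m‖)
      have e1 : ∀ m : Fin M, |ω m - Ω m| / Real.sqrt (Ω m) * (Real.sqrt (Ω m) * ‖g m‖)
          = |ω m - Ω m| * ‖g m‖ := fun m => by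
        have h := Real.sqrt_pos.mpr (hΩ m)
        field_simp
      have e2 : ∀ m : Fin M, (|ω m - Ω m| / Real.sqrt (Ω m)) ^ 2 = (ω m - Ω m) ^ 2 / Ω m :=
        fun m => by rw [div_pow, sq_abs, Real.sq_sqrt (hΩ m).le]
      have e3 : ∀ m : Fin M, (Real.sqrt (Ω m) * ‖g m‖) ^ 2 = Ω m * ‖g m‖ ^ 2 :=
        fun m => by rw [mul_pow, Real.sq_sqrt (hΩ m).le]
      simp only [e1, e2, e3] at hcs0
      exact hcs0
    have h3 : ∑ m, |ω m - Ω m| * ‖g m‖ ≤ Real.sqrt (χ2 * Q) := by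
      have hnn : 0 ≤ ∑ m, |ω m - Ω m| * ‖g m‖ :=
        Finset.sum_nonneg fun m _ => mul_nonneg (abs_nonneg _) (norm_nonneg _)
      nlinarith [Real.sq_sqrt (mul_nonneg hχ2nn hQnn), Real.sqrt_nonneg (χ2 * Q)]
    calc ‖∑ m, (ω m - Ω m) • g m‖ ≤ Real.sqrt (χ2 * Q) := h1.trans h3
      _ = Real.sqrt χ2 * Real.sqrt Q := Real.sqrt_mul hχ2nn _
  -- Step 3
  have h4 : Real.sqrt Q ≤ β * ‖S‖ + κ := by
    have hb : 0 ≤ β * ‖S‖ + κ := by positivity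
    have : Q ≤ (β * ‖S‖ + κ) ^ 2 := by nlinarith [norm_nonneg S, mul_nonneg (mul_nonneg (zero_le_one.trans hβ) (norm_nonneg S)) hκ]
    calc Real.sqrt Q ≤ Real.sqrt ((β * ‖S‖ + κ) ^ 2) := Real.sqrt_le_sqrt this
      _ = β * ‖S‖ + κ := Real.sqrt_sq hb
  have hcs2 : ‖∑ m, (ω m - Ω m) • g m‖ ≤ Real.sqrt χ2 * (β * ‖S‖ + κ) :=
    hcs.trans (mul_le_mul_of_nonneg_left h4 (Real.sqrt_nonneg _))
  calc ‖∑ m, ω m • g m‖ ≤ ‖∑ m, (ω m - Ω m) • g m‖ + ‖S‖ := hsplit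
    _ ≤ Real.sqrt χ2 * (β * ‖S‖ + κ) + ‖S‖ := by linarith
    _ = (β * Real.sqrt χ2 + 1) * ‖S‖ + κ * Real.sqrt χ2 := by ring
end

section
/- (Achievability) With M = 2 clients, F_m(x) = (1/2)(x − (−1)^m e)², e > 0, effective weights Ω_m = (1−q_m)T_m/((1−q₁)T₁+(1−q₂)T₂), and the surrogate minimizer X̃* = Ω₂e − Ω₁e, the true objective F(x) = (1/2)·(1/2)(x+e)² + (1/2)·(1/2)(x−e)² satisfies ‖∇F(X̃*)‖² = χ²·κ², where χ² = ((1−q₂)T₂−(1−q₁)T₁)²/(4(1−q₁)(1−q₂)T₁T₂) and κ² = 4Ω₁Ω₂e². -/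
theorem achievability_two_clients (T₁ T₂ q₁ q₂ e : ℝ)
    (hT1 : 0 < T₁) (hT2 : 0 < T₂)
    (hq1 : q₁ ∈ Set.Ico (0:ℝ) 1) (hq2 : q₂ ∈ Set.Ico (0:ℝ) 1) (he : 0 < e)
    (Ω₁ Ω₂ Xstar : ℝ)
    (hΩ1 : Ω₁ = (1 - q₁) * T₁ / ((1 - q₁) * T₁ + (1 - q₂) * T₂))
    (hΩ2 : Ω₂ = (1 - q₂) * T₂ / ((1 - q₁) * T₁ + (1 - q₂) * T₂))
    (hX : Xstar = Ω₂ * e - Ω₁ * e) :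
    ((1/2) * (Xstar + e) + (1/2) * (Xstar - e)) ^ 2 =
      (((1 - q₂) * T₂ - (1 - q₁) * T₁) ^ 2 / (4 * (1 - q₁) * (1 - q₂) * T₁ * T₂)) *
        (4 * Ω₁ * Ω₂ * e ^ 2) := by
  obtain ⟨hq10, hq11⟩ := hq1
  obtain ⟨hq20, hq21⟩ := hq2
  set a := (1 - q₁) * T₁ with ha
  set b := (1 - q₂) * T₂ with hb
  have h1 : 0 < a := mul_pos (by linarith) hT1
  have h2 : 0 < b := mul_pos (by linarith) hT2
  have hs : a + b ≠ 0 := by positivity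
  have hrw : 4 * (1 - q₁) * (1 - q₂) * T₁ * T₂ = 4 * (a * b) := by
    rw [ha, hb]; ring
  rw [hrw, hX, hΩ1, hΩ2]
  field_simp
  ring
end
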